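/- Let H0 be a self-adjoint operator with H0 ≥ 1 and spectral projections Q^0_L = E([1,L]), let B be a symmetric operator with D(H0) ⊆ D(B) such that H = H0 + B is self-adjoint on D(H0), and assume D = D^∞(H0) = D^∞(H). Then for every X ∈ L†(D), the cut-offed operators Q^0_L X Q^0_L converge to X in the quasi-uniform topology τ_*^D as L → ∞; in particular, for every f ∈ F and k ∈ ℕ, ‖f(H0)(X − Q^0_L X Q^0_L) H0^k‖ → 0 and ‖H0^k (X − Q^0_L X Q^0_L) f(H0)‖ → 0. -/

import Mathlib

open scoped ComplexInnerProductSpace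

namespace Paper

/-- An unbounded linear operator in a Hilbert space `𝓗`, encoded by a distinguished
domain together with a globally defined linear extension of its action. -/
structure Op (𝓗 : Type*) [NormedAddCommGroup 𝓗] [InnerProductSpace ℂ 𝓗] where
  dom : Submodule ℂ 𝓗
  op : 𝓗 →ₗ[ℂ] 𝓗

variable {𝓗 : Type*} [NormedAddCommGroup 𝓗] [InnerProductSpace ℂ 𝓗]

namespace Op

/-- `T.pw k` is the `k`-th power `T^k` of `T`, as a function. -/
def pw (T : Op 𝓗) (k : ℕ) : 𝓗 → 𝓗 := (fun x => T.op x)^[k]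

/-- The domain `D(Tⁿ)` of the `n`-th power of `T`. -/
def domPow (T : Op 𝓗) : ℕ → Set 𝓗
  | 0 => Set.univ
  | n + 1 => {x | x ∈ T.dom ∧ T.op x ∈ T.domPow n}

/-- The set of C^∞-vectors `D^∞(T) = ⋂ₙ D(Tⁿ)`. -/
def Dinf (T : Op 𝓗) : Set 𝓗 := ⋂ n : ℕ, T.domPow n

/-- `T` is symmetric. -/
def Symmetric (T : Op 𝓗) : Prop :=
  ∀ x ∈ T.dom, ∀ y ∈ T.dom, ⟪T.op x, y⟫ = ⟪x, T.op y⟫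

/-- Self-adjointness: densely defined, symmetric, and every vector in the domain of the
adjoint already belongs to the domain (on which the adjoint acts as the operator). -/
def IsSelfAdjoint (T : Op 𝓗) : Prop :=
  Dense (T.dom : Set 𝓗) ∧ T.Symmetric ∧
    ∀ y z : 𝓗, (∀ x ∈ T.dom, ⟪T.op x, y⟫ = ⟪x, z⟫) → y ∈ T.dom ∧ T.op y = z

/-- `T ≥ 1`. -/
def GeOne (T : Op 𝓗) : Prop := ∀ x ∈ T.dom, ‖x‖ ^ 2 ≤ (⟪T.op x, x⟫).re

/-- The perturbed operator `T + B`, with domain `D(T)`. -/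
def pert (T B : Op 𝓗) : Op 𝓗 := ⟨T.dom, T.op + B.op⟩

/-- The graph topology `t_T` on a subset `D`, generated by the seminorms `φ ↦ ‖Tⁿφ‖`,
i.e. the initial topology for the maps `φ ↦ Tⁿφ`. -/
def graphTopOn (T : Op 𝓗) (D : Set 𝓗) : TopologicalSpace D :=
  ⨅ n : ℕ, TopologicalSpace.induced (fun φ : D => T.pw n ↑φ) inferInstance

end Op

/-- `D0` is a core for the `k`-th power of `T`. -/
def IsCorePow (T : Op 𝓗) (k : ℕ) (D0 : Set 𝓗) : Prop :=
  D0 ⊆ T.domPow k ∧ ∀ x ∈ T.domPow k, ∃ u : ℕ → 𝓗, (∀ n, u n ∈ D0) ∧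
    Filter.Tendsto u Filter.atTop (nhds x) ∧
    Filter.Tendsto (fun n => T.pw k (u n)) Filter.atTop (nhds (T.pw k x))

/-- Membership in the O*-algebra `L†(D)`: `A` maps `D` into `D`, `D ⊆ D(A*)` and
`A* D ⊆ D` (witnessed by `Adag`). -/
def MemLdag (D : Set 𝓗) (A : 𝓗 →ₗ[ℂ] 𝓗) : Prop :=
  (∀ x ∈ D, A x ∈ D) ∧
    ∃ Adag : 𝓗 →ₗ[ℂ] 𝓗, (∀ x ∈ D, Adag x ∈ D) ∧
      ∀ x ∈ D, ∀ y ∈ D, ⟪A x, y⟫ = ⟪x, Adag y⟫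

/-- The operator norm of (the bounded extension of) `A`, computed on the unit ball of `D`. -/
noncomputable def opNormOn (D : Set 𝓗) (A : 𝓗 → 𝓗) : ℝ :=
  ⨆ φ : {ψ : 𝓗 // ψ ∈ D ∧ ‖ψ‖ ≤ 1}, ‖A ↑φ‖

/-- The class `F` of positive, bounded, continuous functions on `[0,∞)` which decrease
faster than any inverse power of `x`. -/
def IsInF (f : ℝ → ℝ) : Prop :=
  Continuous f ∧ (∀ x : ℝ, 0 ≤ x → 0 < f x) ∧
    ∀ k : ℕ, ∃ M : ℝ, ∀ x : ℝ, 0 ≤ x → x ^ k * f x ≤ M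

/-- The bounded measurable functional calculus of a self-adjoint operator `T` whose
spectrum is contained in `[a, ∞)`. -/
structure FnCalc (T : Op 𝓗) (a : ℝ) where
  Φ : (ℝ → ℝ) → (𝓗 →L[ℂ] 𝓗)
  Φ_one : Φ (fun _ => 1) = 1
  Φ_add : ∀ f g : ℝ → ℝ, Measurable f → Measurable g →
    Φ (fun t => f t + g t) = Φ f + Φ g
  Φ_mul : ∀ f g : ℝ → ℝ, Measurable f → Measurable g →
    Φ (fun t => f t * g t) = (Φ f).comp (Φ g)
  Φ_symm : ∀ (f : ℝ → ℝ) (x y : 𝓗), ⟪Φ f x, y⟫ = ⟪x, Φ f y⟫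
  Φ_norm : ∀ (f : ℝ → ℝ) (M : ℝ), (∀ t : ℝ, a ≤ t → |f t| ≤ M) →
    ∀ x : 𝓗, ‖Φ f x‖ ≤ M * ‖x‖
  Φ_supp : ∀ f : ℝ → ℝ, Measurable f → (∀ t : ℝ, a ≤ t → f t = 0) → Φ f = 0
  Φ_pos : ∀ f : ℝ → ℝ, Measurable f → (∀ t : ℝ, a ≤ t → 0 ≤ f t) →
    ∀ x : 𝓗, 0 ≤ (⟪Φ f x, x⟫).re
  Φ_dom : ∀ f : ℝ → ℝ, Measurable f → (∃ M : ℝ, ∀ t : ℝ, a ≤ t → |t * f t| ≤ M) →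
    ∀ x : 𝓗, Φ f x ∈ T.dom ∧ T.op (Φ f x) = Φ (fun t => t * f t) x
  Q_tendsto : ∀ x : 𝓗, Filter.Tendsto
    (fun L : ℝ => Φ (Set.indicator (Set.Icc a L) fun _ => (1 : ℝ)) x)
    Filter.atTop (nhds x)

/-- The spectral projection `Q_L = E([a, L])` of `T`. -/
noncomputable def FnCalc.Q {T : Op 𝓗} {a : ℝ} (c : FnCalc T a) (L : ℝ) : 𝓗 →L[ℂ] 𝓗 :=
  c.Φ (Set.indicator (Set.Icc a L) fun _ => (1 : ℝ))

/-- The seminorm `A ↦ max{‖Tᵏ A f(T)‖, ‖f(T) A Tᵏ‖}` of the quasi-uniform topology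
`τ_*` on `L†(D)`. -/
noncomputable def qseminorm {T : Op 𝓗} {a : ℝ} (c : FnCalc T a) (D : Set 𝓗)
    (f : ℝ → ℝ) (k : ℕ) (A : 𝓗 →ₗ[ℂ] 𝓗) : ℝ :=
  max (opNormOn D fun φ => T.pw k (A (c.Φ f φ)))
      (opNormOn D fun φ => c.Φ f (A (T.pw k φ)))

/-- `i[A,T] = i(A T - T A)`, as a function. -/
noncomputable def commI (A T : 𝓗 → 𝓗) : 𝓗 → 𝓗 :=
  fun φ => Complex.I • (A (T φ) - T (A φ))

/-- Iterated commutators: `itComm A B j = [A, B]_j`, with `[A,B]_0 = B` and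
`[A,B]_{j+1} = [A, [A,B]_j]`. -/
def itComm (A B : 𝓗 → 𝓗) : ℕ → (𝓗 → 𝓗)
  | 0 => B
  | j + 1 => fun φ => A (itComm A B j φ) - itComm A B j (A φ)

/-! With `Q = Q⁰_L` write `X - QXQ = (1 - Q)X + QX(1 - Q)`. The operator `f(H0) X H0^m` has the
everywhere defined adjoint `H0^m X† f(H0)`, so it is bounded on `D` (Hellinger–Toeplitz, via
Banach–Steinhaus). On the range of `1 - Q` the inverse `H0⁻¹` has norm at most `L⁻¹`; pulling it
out of each term bounds `‖f(H0)(X - QXQ)H0^k‖` by `C/L`. The second seminorm of `X` is bounded by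
the first one of `X†`, by taking adjoints on `D`. -/

section HilbertSpace

variable {𝕜 E : Type*} [RCLike 𝕜] [NormedAddCommGroup E] [InnerProductSpace 𝕜 E]

theorem exists_norm_le_mul_of_inner_eq [CompleteSpace E] {D : Set E} {A B : E → E}
    (h : ∀ u ∈ D, ∀ y, inner 𝕜 (A u) y = inner 𝕜 u (B y)) : ∃ C ≥ 0, ∀ u ∈ D, ‖A u‖ ≤ C * ‖u‖ := by
  let g : D → E →L[𝕜] 𝕜 := fun u => ((‖(u : E)‖⁻¹ : ℝ) : 𝕜) • innerSL 𝕜 (A u)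
  have hg : ∀ u : D, ‖g u‖ = ‖(u : E)‖⁻¹ * ‖A u‖ := fun u => by
    simp [g, norm_smul, innerSL_apply_norm]
  have hpointwise : ∀ y, ∃ C, ∀ u, ‖g u y‖ ≤ C := fun y => ⟨‖B y‖, fun u => calc
    ‖g u y‖ = ‖(u : E)‖⁻¹ * ‖inner 𝕜 (u : E) (B y)‖ := by simp [g, h u u.2]
    _ ≤ ‖(u : E)‖⁻¹ * (‖(u : E)‖ * ‖B y‖) := by gcongr; exact norm_inner_le_norm _ _
    _ ≤ ‖B y‖ := by
      rcases eq_or_ne (u : E) 0 with hu0 | hu0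
      · simp [hu0]
      · rw [← mul_assoc, inv_mul_cancel₀ (norm_ne_zero_iff.2 hu0), one_mul]⟩
  obtain ⟨C, hC⟩ := banach_steinhaus hpointwise
  refine ⟨max C 0, le_max_right _ _, fun u hu => ?_⟩
  rcases eq_or_ne u 0 with rfl | hu0
  · have hA0 : A 0 = 0 := ext_inner_right 𝕜 fun y => by
      rw [h 0 hu y, inner_zero_left, inner_zero_left]
    simp [hA0]
  · have := hC ⟨u, hu⟩
    rw [hg, inv_mul_le_iff₀ (norm_pos_iff.2 hu0), mul_comm] at this
    exact this.trans (mul_le_mul_of_nonneg_right (le_max_left _ _) (norm_nonneg _))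

theorem norm_le_mul_of_inner_eq {D : Set E} {A B : E → E} {c : ℝ} (hA : ∀ u ∈ D, A u ∈ D)
    (h : ∀ u ∈ D, ∀ v ∈ D, inner 𝕜 (A u) v = inner 𝕜 u (B v)) (hB : ∀ v ∈ D, ‖B v‖ ≤ c * ‖v‖) :
    ∀ u ∈ D, ‖A u‖ ≤ c * ‖u‖ := by
  intro u hu
  have key : ‖A u‖ * ‖A u‖ ≤ c * ‖u‖ * ‖A u‖ := calc
    ‖A u‖ * ‖A u‖ = RCLike.re (inner 𝕜 (A u) (A u)) := (inner_self_eq_norm_mul_norm _).symm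
    _ = RCLike.re (inner 𝕜 u (B (A u))) := by rw [h u hu _ (hA u hu)]
    _ ≤ ‖inner 𝕜 u (B (A u))‖ := RCLike.re_le_norm _
    _ ≤ ‖u‖ * ‖B (A u)‖ := norm_inner_le_norm _ _
    _ ≤ ‖u‖ * (c * ‖A u‖) := by gcongr; exact hB _ (hA u hu)
    _ = c * ‖u‖ * ‖A u‖ := by ring
  rcases (norm_nonneg (A u)).eq_or_lt with h0 | h0
  · rw [← h0]; exact (norm_nonneg _).trans (hB u hu)
  · exact le_of_mul_le_mul_right key h0

end HilbertSpace

section OpNormOn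

variable {E : Type*} [NormedAddCommGroup E]

theorem opNormOn_le {D : Set E} {A : E → E} {c : ℝ} (hc : 0 ≤ c)
    (h : ∀ φ ∈ D, ‖A φ‖ ≤ c * ‖φ‖) : opNormOn D A ≤ c :=
  Real.iSup_le (fun φ => (h φ φ.2.1).trans (mul_le_of_le_one_right hc φ.2.2)) hc

open Filter Topology in
theorem tendsto_opNormOn_zero {D : Set E} {A : ℝ → E → E} {C : ℝ} (hC : 0 ≤ C)
    (h : ∀ L > 0, ∀ φ ∈ D, ‖A L φ‖ ≤ C * L⁻¹ * ‖φ‖) :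
    Tendsto (fun L => opNormOn D (A L)) atTop (𝓝 0) := by
  have hlim : Tendsto (fun L : ℝ => C * L⁻¹) atTop (𝓝 0) := by
    simpa using tendsto_inv_atTop_zero.const_mul C
  refine tendsto_of_tendsto_of_tendsto_of_le_of_le' tendsto_const_nhds hlim
    (Eventually.of_forall fun L => Real.iSup_nonneg fun _ => norm_nonneg _) ?_
  filter_upwards [eventually_gt_atTop 0] with L hL
  exact opNormOn_le (by positivity) (h L hL)

end OpNormOn

namespace Op

variable {T : Op 𝓗} {x y : 𝓗}

theorem pw_eq_pow (k : ℕ) : T.pw k = ⇑(T.op ^ k) :=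
  (Module.End.coe_pow T.op k).symm

theorem pw_succ (k : ℕ) (x : 𝓗) : T.pw (k + 1) x = T.pw k (T.op x) :=
  Function.iterate_succ_apply _ _ _

theorem pw_succ' (k : ℕ) (x : 𝓗) : T.pw (k + 1) x = T.op (T.pw k x) :=
  Function.iterate_succ_apply' _ _ _

theorem pw_sub (k : ℕ) (x y : 𝓗) : T.pw k (x - y) = T.pw k x - T.pw k y := by
  rw [pw_eq_pow, map_sub]

theorem mem_Dinf_iff : x ∈ T.Dinf ↔ x ∈ T.dom ∧ T.op x ∈ T.Dinf := by
  simp only [Dinf, Set.mem_iInter]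
  refine ⟨fun h => ⟨(h 1).1, fun n => (h (n + 1)).2⟩, fun h n => ?_⟩
  cases n with
  | zero => trivial
  | succ n => exact ⟨h.1, h.2 n⟩

theorem mem_dom_of_mem_Dinf (hx : x ∈ T.Dinf) : x ∈ T.dom :=
  (mem_Dinf_iff.1 hx).1

theorem pw_mem_Dinf (hx : x ∈ T.Dinf) (k : ℕ) : T.pw k x ∈ T.Dinf := by
  induction k generalizing x with
  | zero => exact hx
  | succ k ih => rw [pw_succ]; exact ih (mem_Dinf_iff.1 hx).2

theorem sub_mem_domPow {n : ℕ} (hx : x ∈ T.domPow n) (hy : y ∈ T.domPow n) :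
    x - y ∈ T.domPow n := by
  induction n generalizing x y with
  | zero => trivial
  | succ n ih => exact ⟨sub_mem hx.1 hy.1, by rw [map_sub]; exact ih hx.2 hy.2⟩

theorem sub_mem_Dinf (hx : x ∈ T.Dinf) (hy : y ∈ T.Dinf) : x - y ∈ T.Dinf :=
  Set.mem_iInter.2 fun n => sub_mem_domPow (Set.mem_iInter.1 hx n) (Set.mem_iInter.1 hy n)

theorem Symmetric.inner_pw (hT : T.Symmetric) (hx : x ∈ T.Dinf) (hy : y ∈ T.Dinf) (k : ℕ) :
    ⟪T.pw k x, y⟫ = ⟪x, T.pw k y⟫ := by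
  induction k generalizing x with
  | zero => rfl
  | succ k ih =>
    rw [pw_succ, ih (mem_Dinf_iff.1 hx).2, pw_succ']
    exact hT x (mem_dom_of_mem_Dinf hx) _ (mem_dom_of_mem_Dinf (pw_mem_Dinf hy k))

end Op

def RapidDecay (a : ℝ) (g : ℝ → ℝ) : Prop :=
  Measurable g ∧ ∀ n : ℕ, ∃ M : ℝ, ∀ t : ℝ, a ≤ t → |t ^ n * g t| ≤ M

namespace RapidDecay

variable {a : ℝ} {g : ℝ → ℝ}

theorem bdd_id_mul (hg : RapidDecay a g) : ∃ M : ℝ, ∀ t : ℝ, a ≤ t → |t * g t| ≤ M := by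
  simpa using hg.2 1

theorem id_mul (hg : RapidDecay a g) : RapidDecay a fun t => t * g t := by
  refine ⟨measurable_id.mul hg.1, fun n => ?_⟩
  obtain ⟨M, hM⟩ := hg.2 (n + 1)
  exact ⟨M, fun t ht => by rw [← mul_assoc, ← pow_succ]; exact hM t ht⟩

theorem indicator_Icc (a L : ℝ) : RapidDecay a ((Set.Icc a L).indicator fun _ => 1) := by
  refine ⟨measurable_const.indicator measurableSet_Icc, fun n => ⟨(|a| + |L|) ^ n, fun t _ => ?_⟩⟩
  by_cases ht : t ∈ Set.Icc a L
  · rw [Set.indicator_of_mem ht, mul_one, abs_pow]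
    obtain ⟨hat, htL⟩ := ht
    exact pow_le_pow_left₀ (abs_nonneg t) (abs_le.2 ⟨by linarith [neg_abs_le a, abs_nonneg L],
      by linarith [le_abs_self L, abs_nonneg a]⟩) n
  · rw [Set.indicator_of_notMem ht, mul_zero, abs_zero]
    positivity

end RapidDecay

theorem IsInF.rapidDecay {f : ℝ → ℝ} (hf : IsInF f) {a : ℝ} (ha : 0 ≤ a) : RapidDecay a f := by
  refine ⟨hf.1.measurable, fun n => ?_⟩
  obtain ⟨M, hM⟩ := hf.2.2 n
  refine ⟨M, fun t ht => ?_⟩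
  have ht0 : 0 ≤ t := ha.trans ht
  rw [abs_of_nonneg (mul_nonneg (pow_nonneg ht0 n) (hf.2.1 t ht0).le)]
  exact hM t ht0

namespace FnCalc

variable {T : Op 𝓗} {a : ℝ} (c : FnCalc T a) {g h : ℝ → ℝ} {L : ℝ} {x : 𝓗}

theorem Φ_congr (hg : Measurable g) (hh : Measurable h) (hgh : ∀ t, a ≤ t → g t = h t) :
    c.Φ g = c.Φ h := by
  have hz : c.Φ (fun t => g t - h t) = 0 :=
    c.Φ_supp _ (hg.sub hh) fun t ht => by rw [hgh t ht, sub_self]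
  rw [show g = fun t => h t + (g t - h t) by ext; ring, c.Φ_add h (fun t => g t - h t) hh (hg.sub hh),
    hz, add_zero]

theorem Φ_sub (hg : Measurable g) (hh : Measurable h) :
    c.Φ (fun t => g t - h t) = c.Φ g - c.Φ h := by
  rw [eq_sub_iff_add_eq, ← c.Φ_add (fun t => g t - h t) h (hg.sub hh) hh]
  simp

theorem Φ_Φ (hg : Measurable g) (hh : Measurable h) (x : 𝓗) :
    c.Φ g (c.Φ h x) = c.Φ (fun t => g t * h t) x := by
  rw [c.Φ_mul g h hg hh]; rfl

theorem Φ_op (hT : T.Symmetric) (hg : Measurable g) (hb : ∃ M, ∀ t, a ≤ t → |t * g t| ≤ M)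
    (hx : x ∈ T.dom) : c.Φ g (T.op x) = T.op (c.Φ g x) := by
  rw [(c.Φ_dom g hg hb x).2]
  refine ext_inner_right ℂ fun y => ?_
  have hy := c.Φ_dom g hg hb y
  rw [c.Φ_symm, hT x hx _ hy.1, hy.2, c.Φ_symm]

theorem pw_Φ (hT : T.Symmetric) (hg : Measurable g) (hb : ∃ M, ∀ t, a ≤ t → |t * g t| ≤ M)
    (hx : x ∈ T.Dinf) (k : ℕ) : T.pw k (c.Φ g x) = c.Φ g (T.pw k x) := by
  induction k generalizing x with
  | zero => rfl
  | succ k ih =>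
    rw [Op.pw_succ, Op.pw_succ, ← c.Φ_op hT hg hb (Op.mem_dom_of_mem_Dinf hx),
      ih (Op.mem_Dinf_iff.1 hx).2]

theorem Φ_mem_Dinf (hg : RapidDecay a g) (x : 𝓗) : c.Φ g x ∈ T.Dinf := by
  refine Set.mem_iInter.2 fun n => ?_
  induction n generalizing g with
  | zero => trivial
  | succ n ih =>
    have hdom := c.Φ_dom g hg.1 hg.bdd_id_mul x
    exact ⟨hdom.1, hdom.2 ▸ ih hg.id_mul⟩

theorem Q_mem_Dinf (L : ℝ) (x : 𝓗) : c.Q L x ∈ T.Dinf :=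
  c.Φ_mem_Dinf (RapidDecay.indicator_Icc a L) x

theorem norm_Q_apply_le (L : ℝ) (x : 𝓗) : ‖c.Q L x‖ ≤ ‖x‖ := by
  refine (c.Φ_norm _ 1 (fun t _ => ?_) x).trans_eq (one_mul _)
  by_cases ht : t ∈ Set.Icc a L <;> simp [ht]

theorem inner_Q_left (L : ℝ) (x y : 𝓗) : ⟪c.Q L x, y⟫ = ⟪x, c.Q L y⟫ :=
  c.Φ_symm _ x y

theorem pw_Q (hT : T.Symmetric) (hx : x ∈ T.Dinf) (k : ℕ) :
    T.pw k (c.Q L x) = c.Q L (T.pw k x) :=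
  c.pw_Φ hT (RapidDecay.indicator_Icc a L).1 (RapidDecay.indicator_Icc a L).bdd_id_mul hx k

theorem Φ_Q (hg : Measurable g) (x : 𝓗) : c.Φ g (c.Q L x) = c.Q L (c.Φ g x) := by
  have hχ := (RapidDecay.indicator_Icc a L).1
  rw [FnCalc.Q, c.Φ_Φ hg hχ, c.Φ_Φ hχ hg]
  simp only [mul_comm]

theorem sub_Q_apply (L : ℝ) (x : 𝓗) :
    x - c.Q L x = c.Φ ((Set.Ioi L).indicator fun _ => 1) x := by
  have hχ := (RapidDecay.indicator_Icc a L).1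
  have htail : c.Φ ((Set.Ioi L).indicator fun _ => 1) =
      c.Φ fun t => (1 : ℝ) - (Set.Icc a L).indicator (fun _ => 1) t := by
    refine c.Φ_congr (measurable_const.indicator measurableSet_Ioi) (measurable_const.sub hχ)
      fun t ht => ?_
    by_cases htL : t ≤ L <;> simp [Set.indicator_apply, htL, ht]
  have hsub : (c.Φ fun t => (1 : ℝ) - (Set.Icc a L).indicator (fun _ => 1) t) =
      c.Φ (fun _ => 1) - c.Q L := c.Φ_sub measurable_const hχ
  rw [htail, hsub, c.Φ_one]
  rfl

end FnCalc

namespace FnCalc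

variable {T : Op 𝓗} {a : ℝ} (c : FnCalc T a) {g : ℝ → ℝ} {L : ℝ} {x : 𝓗}

theorem norm_Φ_indicator_inv_le (hL : 0 < L) (x : 𝓗) :
    ‖c.Φ ((Set.Ioi L).indicator fun t => t⁻¹) x‖ ≤ L⁻¹ * ‖x‖ := by
  refine c.Φ_norm _ _ (fun t _ => ?_) x
  by_cases ht : t ∈ Set.Ioi L
  · rw [Set.indicator_of_mem ht, abs_of_pos (inv_pos.2 (hL.trans ht))]
    exact inv_anti₀ hL (le_of_lt ht)
  · rw [Set.indicator_of_notMem ht, abs_zero]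
    positivity

theorem op_Φ_indicator_inv (hL : 0 ≤ L) (x : 𝓗) :
    c.Φ ((Set.Ioi L).indicator fun t => t⁻¹) x ∈ T.dom ∧
      T.op (c.Φ ((Set.Ioi L).indicator fun t => t⁻¹) x) = x - c.Q L x := by
  have hmul : (fun t => t * (Set.Ioi L).indicator (fun t => t⁻¹) t) =
      (Set.Ioi L).indicator fun _ => 1 := by
    ext t
    by_cases ht : t ∈ Set.Ioi L
    · simp [ht, (hL.trans_lt ht).ne']
    · simp [ht]
  have hb : ∃ M, ∀ t, a ≤ t → |t * (Set.Ioi L).indicator (fun t => t⁻¹) t| ≤ M :=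
    ⟨1, fun t _ => by
      rw [congrFun hmul t]
      by_cases ht : t ∈ Set.Ioi L <;> simp [ht]⟩
  rw [c.sub_Q_apply, ← hmul]
  exact c.Φ_dom _ (measurable_inv.indicator measurableSet_Ioi) hb x

theorem Φ_indicator_inv_mem_Dinf (hL : 0 ≤ L) (hx : x ∈ T.Dinf) :
    c.Φ ((Set.Ioi L).indicator fun t => t⁻¹) x ∈ T.Dinf := by
  obtain ⟨hdom, hop⟩ := c.op_Φ_indicator_inv hL x
  exact Op.mem_Dinf_iff.2 ⟨hdom, hop ▸ Op.sub_mem_Dinf hx (c.Q_mem_Dinf L x)⟩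

theorem sub_Q_pw (hT : T.Symmetric) (hL : 0 ≤ L) (hx : x ∈ T.Dinf) (k : ℕ) :
    T.pw k x - c.Q L (T.pw k x) = T.pw (k + 1) (c.Φ ((Set.Ioi L).indicator fun t => t⁻¹) x) := by
  rw [Op.pw_succ, (c.op_Φ_indicator_inv hL x).2, Op.pw_sub, c.pw_Q hT hx]

theorem Φ_sub_Q (hL : 0 ≤ L) (hg : Measurable g) (y : 𝓗) :
    c.Φ g (y - c.Q L y) =
      c.Φ ((Set.Ioi L).indicator fun t => t⁻¹) (c.Φ (fun t => t * g t) y) := by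
  rw [c.sub_Q_apply, c.Φ_Φ (h := (Set.Ioi L).indicator fun _ => 1) hg
    (measurable_const.indicator measurableSet_Ioi), c.Φ_Φ (g := (Set.Ioi L).indicator fun t => t⁻¹)
    (h := fun t => t * g t) (measurable_inv.indicator measurableSet_Ioi) (measurable_id.mul hg)]
  congr 2
  ext t
  by_cases ht : t ∈ Set.Ioi L
  · simp [ht, (hL.trans_lt ht).ne']
  · simp [ht]

theorem inner_sub_Q_comp_Q {X X' : 𝓗 → 𝓗}
    (hXX' : ∀ x ∈ T.Dinf, ∀ y ∈ T.Dinf, ⟪X x, y⟫ = ⟪x, X' y⟫) {u v : 𝓗}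
    (hu : u ∈ T.Dinf) (hv : v ∈ T.Dinf) :
    ⟪X u - c.Q L (X (c.Q L u)), v⟫ = ⟪u, X' v - c.Q L (X' (c.Q L v))⟫ := by
  rw [inner_sub_left, inner_sub_right, c.inner_Q_left, hXX' u hu v hv,
    hXX' _ (c.Q_mem_Dinf L u) _ (c.Q_mem_Dinf L v), c.inner_Q_left]

variable [CompleteSpace 𝓗] {X : 𝓗 →ₗ[ℂ] 𝓗} {f : ℝ → ℝ}

theorem exists_norm_Φ_pw_le (hT : T.Symmetric) (hX : MemLdag T.Dinf X) (hg : RapidDecay a g)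
    (m : ℕ) : ∃ C ≥ 0, ∀ u ∈ T.Dinf, ‖c.Φ g (X (T.pw m u))‖ ≤ C * ‖u‖ := by
  obtain ⟨-, X', hX'D, hXX'⟩ := hX
  refine exists_norm_le_mul_of_inner_eq (𝕜 := ℂ) (B := fun y => T.pw m (X' (c.Φ g y))) fun u hu y => ?_
  have hgy := c.Φ_mem_Dinf hg y
  rw [c.Φ_symm, hXX' _ (Op.pw_mem_Dinf hu m) _ hgy, hT.inner_pw hu (hX'D _ hgy)]

theorem exists_norm_Φ_cutoff_le (hT : T.Symmetric) (hX : MemLdag T.Dinf X) (hf : RapidDecay a f)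
    (k : ℕ) : ∃ C ≥ 0, ∀ L > 0, ∀ φ ∈ T.Dinf,
      ‖c.Φ f (X (T.pw k φ) - c.Q L (X (c.Q L (T.pw k φ))))‖ ≤ C * L⁻¹ * ‖φ‖ := by
  obtain ⟨C₁, hC₁0, hC₁⟩ := c.exists_norm_Φ_pw_le hT hX hf.id_mul k
  obtain ⟨C₂, hC₂0, hC₂⟩ := c.exists_norm_Φ_pw_le hT hX hf (k + 1)
  refine ⟨C₁ + C₂, by positivity, fun L hL φ hφ => ?_⟩
  set ψ := T.pw k φ
  have hsplit : X ψ - c.Q L (X (c.Q L ψ)) = (X ψ - c.Q L (X ψ)) + c.Q L (X (ψ - c.Q L ψ)) := by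
    rw [map_sub, map_sub]; abel
  have hfirst : ‖c.Φ f (X ψ - c.Q L (X ψ))‖ ≤ L⁻¹ * (C₁ * ‖φ‖) := by
    rw [c.Φ_sub_Q hL.le hf.1]
    exact (c.norm_Φ_indicator_inv_le hL _).trans (by gcongr; exact hC₁ φ hφ)
  have hsecond : ‖c.Φ f (c.Q L (X (ψ - c.Q L ψ)))‖ ≤ C₂ * (L⁻¹ * ‖φ‖) := by
    rw [c.Φ_Q hf.1, c.sub_Q_pw hT hL.le hφ]
    refine (c.norm_Q_apply_le L _).trans ((hC₂ _ (c.Φ_indicator_inv_mem_Dinf hL.le hφ)).trans ?_)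
    gcongr
    exact c.norm_Φ_indicator_inv_le hL φ
  calc ‖c.Φ f (X ψ - c.Q L (X (c.Q L ψ)))‖
      ≤ ‖c.Φ f (X ψ - c.Q L (X ψ))‖ + ‖c.Φ f (c.Q L (X (ψ - c.Q L ψ)))‖ := by
        rw [hsplit, map_add]; exact norm_add_le _ _
    _ ≤ L⁻¹ * (C₁ * ‖φ‖) + C₂ * (L⁻¹ * ‖φ‖) := add_le_add hfirst hsecond
    _ = (C₁ + C₂) * L⁻¹ * ‖φ‖ := by ring

theorem exists_norm_pw_cutoff_le (hT : T.Symmetric) (hX : MemLdag T.Dinf X) (hf : RapidDecay a f)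
    (k : ℕ) : ∃ C ≥ 0, ∀ L > 0, ∀ φ ∈ T.Dinf,
      ‖T.pw k (X (c.Φ f φ) - c.Q L (X (c.Q L (c.Φ f φ))))‖ ≤ C * L⁻¹ * ‖φ‖ := by
  obtain ⟨hXD, X', hX'D, hXX'⟩ := hX
  have hX' : MemLdag T.Dinf X' := ⟨hX'D, X, hXD, fun x hx y hy => by
    rw [← inner_conj_symm, ← hXX' y hy x hx, inner_conj_symm]⟩
  obtain ⟨C, hC0, hC⟩ := c.exists_norm_Φ_cutoff_le hT hX' hf k
  refine ⟨C, hC0, fun L hL => norm_le_mul_of_inner_eq (𝕜 := ℂ) (fun φ hφ => ?_)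
    (fun φ hφ ψ hψ => ?_) (hC L hL)⟩
  · exact Op.pw_mem_Dinf (Op.sub_mem_Dinf (hXD _ (c.Φ_mem_Dinf hf φ)) (c.Q_mem_Dinf L _)) k
  · have hfφ := c.Φ_mem_Dinf hf φ
    rw [hT.inner_pw (Op.sub_mem_Dinf (hXD _ hfφ) (c.Q_mem_Dinf L _)) hψ,
      c.inner_sub_Q_comp_Q hXX' hfφ (Op.pw_mem_Dinf hψ k), c.Φ_symm]

end FnCalc

variable {𝓗 : Type*} [NormedAddCommGroup 𝓗] [InnerProductSpace ℂ 𝓗] [CompleteSpace 𝓗]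

theorem stmt4_general (H0 : Op 𝓗) (hsa0 : H0.IsSelfAdjoint)
    (S0 : FnCalc H0 1)
    (D : Set 𝓗) (hD0 : D = H0.Dinf) :
    ∀ X : 𝓗 →ₗ[ℂ] 𝓗, MemLdag D X → ∀ f : ℝ → ℝ, IsInF f → ∀ k : ℕ,
      Filter.Tendsto (fun L : ℝ => opNormOn D (fun φ =>
          S0.Φ f (X (H0.pw k φ) - S0.Q L (X (S0.Q L (H0.pw k φ))))))
        Filter.atTop (nhds 0) ∧
      Filter.Tendsto (fun L : ℝ => opNormOn D (fun φ =>
          H0.pw k (X (S0.Φ f φ) - S0.Q L (X (S0.Q L (S0.Φ f φ))))))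
        Filter.atTop (nhds 0) := by
  intro X hX f hf k
  subst hD0
  have hdecay := hf.rapidDecay zero_le_one
  obtain ⟨C₁, hC₁, h₁⟩ := S0.exists_norm_Φ_cutoff_le hsa0.2.1 hX hdecay k
  obtain ⟨C₂, hC₂, h₂⟩ := S0.exists_norm_pw_cutoff_le hsa0.2.1 hX hdecay k
  exact ⟨tendsto_opNormOn_zero hC₁ h₁, tendsto_opNormOn_zero hC₂ h₂⟩

/-- (Lemma 2.2) Under the standing assumptions, for every `X ∈ L†(D)`
the cut-offed operators `Q⁰_L X Q⁰_L` converge to `X` in the quasi-uniform topology: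
for every `f ∈ F` and `k ∈ ℕ`, `‖f(H0)(X - Q⁰_L X Q⁰_L)H0^k‖ → 0` and
`‖H0^k (X - Q⁰_L X Q⁰_L) f(H0)‖ → 0` as `L → ∞`. -/
theorem stmt4 (H0 B : Op 𝓗) (hsa0 : H0.IsSelfAdjoint) (hge : H0.GeOne)
    (hBsymm : B.Symmetric) (hdomB : (H0.dom : Set 𝓗) ⊆ B.dom)
    (hsaH : (H0.pert B).IsSelfAdjoint)
    (S0 : FnCalc H0 1)
    (D : Set 𝓗) (hD0 : D = H0.Dinf) (hDH : D = (H0.pert B).Dinf) :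
    ∀ X : 𝓗 →ₗ[ℂ] 𝓗, MemLdag D X → ∀ f : ℝ → ℝ, IsInF f → ∀ k : ℕ,
      Filter.Tendsto (fun L : ℝ => opNormOn D (fun φ =>
          S0.Φ f (X (H0.pw k φ) - S0.Q L (X (S0.Q L (H0.pw k φ))))))
        Filter.atTop (nhds 0) ∧
      Filter.Tendsto (fun L : ℝ => opNormOn D (fun φ =>
          H0.pw k (X (S0.Φ f φ) - S0.Q L (X (S0.Q L (S0.Φ f φ))))))
        Filter.atTop (nhds 0) :=
  stmt4_general H0 hsa0 S0 D hD0

end Paper
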